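/- Let (H, ρ) be a Gessel pair, and let H₋, H₀, H₊ be the sets of minus-, zero-, and plus-paths respectively. Then H₋, H₀, and H₊ are each free submonoids of H, and the map H → H₋ × H₀ × H₊ sending π to (π₋, π₀, π₊) given by the unique factorization is a bijection. -/

import Mathlib

def rhoVal {α : Type*} (ρ : α → ℤ) (l : List α) : ℤ := (l.map ρ).sum

def IsMinusPath {α : Type*} (ρ : α → ℤ) (l : List α) : Prop :=
  l = [] ∨ (rhoVal ρ l < 0 ∧ ∀ i < l.length, rhoVal ρ l < rhoVal ρ (l.take i))

def IsZeroPath {α : Type*} (ρ : α → ℤ) (l : List α) : Prop :=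
  rhoVal ρ l = 0 ∧ ∀ i : ℕ, 0 ≤ rhoVal ρ (l.take i)

def IsPlusPath {α : Type*} (ρ : α → ℤ) (l : List α) : Prop :=
  ∀ i : ℕ, 0 < i → i ≤ l.length → 0 < rhoVal ρ (l.take i)

/-- An element `p` of a submonoid `M` (of the free monoid on `α`, whose
elements are lists) is a *prime* of `M` if it is nontrivial and admits no
factorization into two nontrivial elements of `M`. -/
def IsPrimeIn {α : Type*} (M : Set (List α)) (p : List α) : Prop :=
  p ∈ M ∧ p ≠ [] ∧ ∀ a b : List α, a ∈ M → b ∈ M → a ++ b = p → a = [] ∨ b = []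

/-- A subset `M` of the free monoid on `α` is a *free submonoid* if it is a
submonoid and every element of `M` factors uniquely into primes of `M`. -/
def IsFreeSubmonoid {α : Type*} (M : Set (List α)) : Prop :=
  [] ∈ M ∧ (∀ a ∈ M, ∀ b ∈ M, a ++ b ∈ M) ∧
    ∀ x ∈ M, ∃! L : List (List α), (∀ q ∈ L, IsPrimeIn M q) ∧ L.flatten = x

/-!
A subset `M ∋ []` of a free monoid closed under concatenation is free as soon as it is stable
in the sense of Schützenberger (`p, s, pr, rs ∈ M` imply `r ∈ M`): then a prime of `M` cannot
be a proper prefix of another, so two prime factorisations begin with the same prime.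
Minus-paths are closed under suffixes, plus-paths under prefixes, and a zero-path with a
zero-path prefix leaves a zero-path, so all three sets are stable.

For the bijection, cut `π` at the first position where its prefix sums attain their minimum:
the prefix is a minus-path and the rest is a path whose prefix sums stay nonnegative. Cut that
rest at the last position where its prefix sum vanishes: the two pieces are a zero-path and a
plus-path. These cut points are forced in any factorisation `π₋ π₀ π₊`, because a longer
minus-path prefix would end strictly below the level of `π₋`, and a longer zero-path prefix
would pass through a positive prefix sum of `π₊`.
-/

section FreeSubmonoid

variable {α : Type*} {M : Set (List α)}

variable (M) in
def IsStable : Prop :=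
  ∀ p r s, p ∈ M → s ∈ M → p ++ r ∈ M → r ++ s ∈ M → r ∈ M

theorem exists_isPrimeIn_flatten_eq (x : List α) (hx : x ∈ M) :
    ∃ L : List (List α), (∀ q ∈ L, IsPrimeIn M q) ∧ L.flatten = x := by
  by_cases hnil : x = []
  · exact ⟨[], by simp, by simp [hnil]⟩
  by_cases hprime : IsPrimeIn M x
  · exact ⟨[x], by simpa using hprime, by simp⟩
  obtain ⟨a, b, ha, hb, hab, ha0, hb0⟩ :
      ∃ a b, a ∈ M ∧ b ∈ M ∧ a ++ b = x ∧ a ≠ [] ∧ b ≠ [] := by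
    simpa [IsPrimeIn, hx, hnil] using hprime
  obtain ⟨La, hLa, hLa_flatten⟩ := exists_isPrimeIn_flatten_eq a ha
  obtain ⟨Lb, hLb, hLb_flatten⟩ := exists_isPrimeIn_flatten_eq b hb
  refine ⟨La ++ Lb, fun q hq => ?_, by simp [hLa_flatten, hLb_flatten, hab]⟩
  rcases List.mem_append.mp hq with hq | hq
  exacts [hLa q hq, hLb q hq]
termination_by x.length
decreasing_by
  all_goals
    rw [← hab, List.length_append]
    have := List.length_pos_iff.mpr ha0
    have := List.length_pos_iff.mpr hb0
    omega

theorem flatten_mem_of_forall_mem (h0 : [] ∈ M) (hmul : ∀ a ∈ M, ∀ b ∈ M, a ++ b ∈ M)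
    {L : List (List α)} (hL : ∀ q ∈ L, q ∈ M) : L.flatten ∈ M := by
  induction L with
  | nil => exact h0
  | cons q L ih => exact hmul q (hL q (by simp)) _ (ih fun x hx => hL x (by simp [hx]))

theorem IsPrimeIn.eq_of_append_eq_append_left
    (hstab : IsStable M)
    {p q r y : List α} (hp : IsPrimeIn M p) (hq : IsPrimeIn M q) (hy : y ∈ M)
    (hpq : q = p ++ r) (hry : r ++ y ∈ M) : q = p := by
  have hr : r ∈ M := hstab p r y hp.1 hy (hpq ▸ hq.1) hry
  rcases hq.2.2 p r hp.1 hr hpq.symm with h | h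
  · exact absurd h hp.2.1
  · rw [hpq, h, List.append_nil]

theorem IsPrimeIn.eq_of_append_eq_append
    (hstab : IsStable M)
    {p q x y : List α} (hp : IsPrimeIn M p) (hq : IsPrimeIn M q) (hx : x ∈ M) (hy : y ∈ M)
    (h : p ++ x = q ++ y) : p = q := by
  rcases List.append_eq_append_iff.mp h with ⟨r, hpq, rfl⟩ | ⟨r, hqp, rfl⟩
  · exact (hp.eq_of_append_eq_append_left hstab hq hy hpq hx).symm
  · exact hq.eq_of_append_eq_append_left hstab hp hx hqp hy

theorem eq_of_isPrimeIn_of_flatten_eq (h0 : [] ∈ M) (hmul : ∀ a ∈ M, ∀ b ∈ M, a ++ b ∈ M)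
    (hstab : IsStable M) :
    ∀ {L₁ L₂ : List (List α)}, (∀ q ∈ L₁, IsPrimeIn M q) → (∀ q ∈ L₂, IsPrimeIn M q) →
      L₁.flatten = L₂.flatten → L₁ = L₂
  | [], [], _, _, _ => rfl
  | [], q :: _, _, h₂, h => absurd (List.append_eq_nil_iff.mp h.symm).1 (h₂ q (by simp)).2.1
  | p :: _, [], h₁, _, h => absurd (List.append_eq_nil_iff.mp h).1 (h₁ p (by simp)).2.1
  | p :: L₁, q :: L₂, h₁, h₂, h => by
    have hL₁ : ∀ x ∈ L₁, IsPrimeIn M x := fun x hx => h₁ x (by simp [hx])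
    have hL₂ : ∀ x ∈ L₂, IsPrimeIn M x := fun x hx => h₂ x (by simp [hx])
    simp only [List.flatten_cons] at h
    have hpq : p = q := (h₁ p (by simp)).eq_of_append_eq_append hstab (h₂ q (by simp))
      (flatten_mem_of_forall_mem h0 hmul fun x hx => (hL₁ x hx).1)
      (flatten_mem_of_forall_mem h0 hmul fun x hx => (hL₂ x hx).1) h
    subst hpq
    rw [eq_of_isPrimeIn_of_flatten_eq h0 hmul hstab hL₁ hL₂ (List.append_cancel_left h)]

theorem isFreeSubmonoid_of_stable (h0 : [] ∈ M) (hmul : ∀ a ∈ M, ∀ b ∈ M, a ++ b ∈ M)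
    (hstab : IsStable M) :
    IsFreeSubmonoid M := by
  refine ⟨h0, hmul, fun x hx => ?_⟩
  obtain ⟨L, hL⟩ := exists_isPrimeIn_flatten_eq x hx
  exact ⟨L, hL, fun L' hL' =>
    eq_of_isPrimeIn_of_flatten_eq h0 hmul hstab hL'.1 hL.1 (hL'.2.trans hL.2.symm)⟩

end FreeSubmonoid

section Paths

variable {α : Type*} (ρ : α → ℤ)

@[simp]
theorem rhoVal_nil : rhoVal ρ ([] : List α) = 0 := rfl

@[simp]
theorem rhoVal_append (a b : List α) : rhoVal ρ (a ++ b) = rhoVal ρ a + rhoVal ρ b := by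
  simp [rhoVal]

theorem rhoVal_take_append (a b : List α) (i : ℕ) :
    rhoVal ρ ((a ++ b).take i) = rhoVal ρ (a.take i) + rhoVal ρ (b.take (i - a.length)) := by
  rw [List.take_append, rhoVal_append]

theorem rhoVal_take_add (l : List α) (i k : ℕ) :
    rhoVal ρ (l.take (i + k)) = rhoVal ρ (l.take i) + rhoVal ρ ((l.drop i).take k) := by
  rw [List.take_add, rhoVal_append]

def IsNonnegPath (l : List α) : Prop :=
  ∀ i : ℕ, 0 ≤ rhoVal ρ (l.take i)

variable {ρ}

theorem IsNonnegPath.append {a b : List α} (ha : IsNonnegPath ρ a) (hb : IsNonnegPath ρ b) :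
    IsNonnegPath ρ (a ++ b) := by
  intro i
  rw [rhoVal_take_append]
  rcases le_or_gt a.length i with h | h
  · have := ha i
    have := hb (i - a.length)
    omega
  · rw [Nat.sub_eq_zero_of_le h.le, List.take_zero, rhoVal_nil, add_zero]
    exact ha i

theorem isMinusPath_iff {l : List α} :
    IsMinusPath ρ l ↔ ∀ i < l.length, rhoVal ρ l < rhoVal ρ (l.take i) := by
  refine ⟨fun h => h.elim (fun hnil => by simp [hnil]) And.right, fun h => ?_⟩
  rcases eq_or_ne l [] with hnil | hne
  · exact Or.inl hnil
  · exact Or.inr ⟨by simpa using h 0 (List.length_pos_iff.mpr hne), h⟩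

theorem IsMinusPath.rhoVal_le_take {a : List α} (ha : IsMinusPath ρ a) (j : ℕ) :
    rhoVal ρ a ≤ rhoVal ρ (a.take j) := by
  rcases lt_or_ge j a.length with h | h
  · exact (isMinusPath_iff.mp ha j h).le
  · rw [List.take_of_length_le h]

theorem isMinusPath_take_of_forall_lt {l : List α} {i : ℕ}
    (h : ∀ j < i, rhoVal ρ (l.take i) < rhoVal ρ (l.take j)) : IsMinusPath ρ (l.take i) := by
  refine isMinusPath_iff.mpr fun j hj => ?_
  rw [List.length_take] at hj
  rw [List.take_take, min_eq_left (by omega)]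
  exact h j (by omega)

theorem IsMinusPath.append {a b : List α} (ha : IsMinusPath ρ a) (hb : IsMinusPath ρ b) :
    IsMinusPath ρ (a ++ b) := by
  refine isMinusPath_iff.mpr fun i hi => ?_
  rw [List.length_append] at hi
  rw [rhoVal_append, rhoVal_take_append]
  rcases lt_or_ge i a.length with h | h
  · have := isMinusPath_iff.mp ha i h
    have := hb.rhoVal_le_take 0
    rw [List.take_zero, rhoVal_nil] at this
    rw [Nat.sub_eq_zero_of_le h.le, List.take_zero, rhoVal_nil]
    omega
  · rw [List.take_of_length_le h]
    have := isMinusPath_iff.mp hb (i - a.length) (by omega)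
    omega

theorem IsMinusPath.of_append_right {p r : List α} (h : IsMinusPath ρ (p ++ r)) :
    IsMinusPath ρ r := by
  refine isMinusPath_iff.mpr fun k hk => ?_
  have := isMinusPath_iff.mp h (p.length + k) (by simp; omega)
  rwa [rhoVal_append, List.take_append, List.take_of_length_le (by omega), rhoVal_append,
    Nat.add_sub_cancel_left, add_lt_add_iff_left] at this

theorem IsZeroPath.isNonnegPath {b : List α} (hb : IsZeroPath ρ b) : IsNonnegPath ρ b :=
  hb.2

theorem IsZeroPath.append {a b : List α} (ha : IsZeroPath ρ a) (hb : IsZeroPath ρ b) :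
    IsZeroPath ρ (a ++ b) :=
  ⟨by rw [rhoVal_append, ha.1, hb.1, add_zero], ha.isNonnegPath.append hb.isNonnegPath⟩

theorem IsZeroPath.of_append_right {p r : List α} (hp : IsZeroPath ρ p)
    (h : IsZeroPath ρ (p ++ r)) : IsZeroPath ρ r := by
  refine ⟨by simpa [hp.1] using h.1, fun k => ?_⟩
  have := h.2 (p.length + k)
  rwa [rhoVal_take_append, List.take_of_length_le (by omega), hp.1, Nat.add_sub_cancel_left,
    zero_add] at this

theorem IsPlusPath.isNonnegPath {c : List α} (hc : IsPlusPath ρ c) : IsNonnegPath ρ c := by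
  intro i
  rw [List.take_eq_take_min]
  rcases Nat.eq_zero_or_pos (min i c.length) with h | h
  · simp [h]
  · exact (hc _ h (min_le_right _ _)).le

theorem IsPlusPath.append {a b : List α} (ha : IsPlusPath ρ a) (hb : IsPlusPath ρ b) :
    IsPlusPath ρ (a ++ b) := by
  intro i hi hile
  rw [List.length_append] at hile
  rw [rhoVal_take_append]
  rcases le_or_gt i a.length with h | h
  · rw [Nat.sub_eq_zero_of_le h, List.take_zero, rhoVal_nil, add_zero]
    exact ha i hi h
  · have := ha.isNonnegPath a.length
    rw [List.take_length] at this
    rw [List.take_of_length_le h.le]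
    have := hb (i - a.length) (by omega) (by omega)
    omega

theorem IsPlusPath.of_append_left {r s : List α} (h : IsPlusPath ρ (r ++ s)) :
    IsPlusPath ρ r := by
  intro k hk hkr
  simpa [List.take_append_of_le_length hkr] using h k hk (by simp; omega)

theorem length_le_of_isMinusPath_append_eq {a r a' r' : List α} (hr : IsNonnegPath ρ r)
    (ha' : IsMinusPath ρ a') (h : a ++ r = a' ++ r') : a'.length ≤ a.length := by
  by_contra! hlt
  have ha'_eq : a' = (a ++ r).take a'.length := by rw [h, List.take_left' rfl]
  have ha'_take : a'.take a.length = a := by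
    rw [ha'_eq, List.take_take, min_eq_left hlt.le, List.take_left' rfl]
  have hdrop := isMinusPath_iff.mp ha' a.length hlt
  rw [ha'_take, ha'_eq, rhoVal_take_append, List.take_of_length_le hlt.le] at hdrop
  have := hr (a'.length - a.length)
  omega

theorem eq_of_isMinusPath_isNonnegPath {a r a' r' : List α} (ha : IsMinusPath ρ a)
    (hr : IsNonnegPath ρ r) (ha' : IsMinusPath ρ a') (hr' : IsNonnegPath ρ r')
    (h : a ++ r = a' ++ r') : a = a' ∧ r = r' :=
  List.append_inj h (le_antisymm (length_le_of_isMinusPath_append_eq hr' ha h.symm)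
    (length_le_of_isMinusPath_append_eq hr ha' h))

theorem length_le_of_isZeroPath_append_eq {b c b' c' : List α} (hb : IsZeroPath ρ b)
    (hc : IsPlusPath ρ c) (hb' : IsZeroPath ρ b') (h : b ++ c = b' ++ c') :
    b'.length ≤ b.length := by
  by_contra! hlt
  have hlen := congrArg List.length h
  rw [List.length_append, List.length_append] at hlen
  have hb'_eq : b' = (b ++ c).take b'.length := by rw [h, List.take_left' rfl]
  have hsum := hb'.1
  rw [hb'_eq, rhoVal_take_append, List.take_of_length_le hlt.le, hb.1] at hsum
  have := hc (b'.length - b.length) (by omega) (by omega)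
  omega

theorem eq_of_isZeroPath_isPlusPath {b c b' c' : List α} (hb : IsZeroPath ρ b)
    (hc : IsPlusPath ρ c) (hb' : IsZeroPath ρ b') (hc' : IsPlusPath ρ c')
    (h : b ++ c = b' ++ c') : b = b' ∧ c = c' :=
  List.append_inj h (le_antisymm (length_le_of_isZeroPath_append_eq hb' hc' hb h.symm)
    (length_le_of_isZeroPath_append_eq hb hc hb' h))

variable (ρ) in
theorem exists_isMinusPath_isNonnegPath (l : List α) :
    ∃ a r, IsMinusPath ρ a ∧ IsNonnegPath ρ r ∧ a ++ r = l := by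
  classical
  have hmin : ∃ i, ∀ j, rhoVal ρ (l.take i) ≤ rhoVal ρ (l.take j) := by
    obtain ⟨i, -, hi⟩ := (Finset.range (l.length + 1)).exists_min_image
      (fun j => rhoVal ρ (l.take j)) ⟨0, by simp⟩
    refine ⟨i, fun j => ?_⟩
    rw [List.take_eq_take_min (i := j)]
    exact hi _ (Finset.mem_range.mpr (by omega))
  let i := Nat.find hmin
  have hi : ∀ j, rhoVal ρ (l.take i) ≤ rhoVal ρ (l.take j) := Nat.find_spec hmin
  refine ⟨l.take i, l.drop i, isMinusPath_take_of_forall_lt fun j hj => ?_, fun k => ?_,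
    l.take_append_drop i⟩
  · exact lt_of_le_of_ne (hi j) fun heq => Nat.find_min hmin hj fun k => heq ▸ hi k
  · have := hi (i + k)
    rw [rhoVal_take_add] at this
    omega

theorem IsNonnegPath.exists_isZeroPath_isPlusPath {r : List α} (hr : IsNonnegPath ρ r) :
    ∃ b c, IsZeroPath ρ b ∧ IsPlusPath ρ c ∧ b ++ c = r := by
  classical
  let P i := rhoVal ρ (r.take i) = 0
  let i := Nat.findGreatest P r.length
  have hi : P i := Nat.findGreatest_spec (Nat.zero_le _) (by simp [P])
  refine ⟨r.take i, r.drop i, ⟨hi, fun j => ?_⟩, fun k hk hkr => ?_, r.take_append_drop i⟩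
  · rw [List.take_take]
    exact hr _
  · rw [List.length_drop] at hkr
    have hne : ¬P (i + k) := Nat.findGreatest_is_greatest (n := r.length) (by omega) (by omega)
    have := hr (i + k)
    simp only [P, rhoVal_take_add, hi] at hne this
    omega

end Paths

theorem bijective_append_minus_zero_plus {α : Type*} (ρ : α → ℤ) :
    Function.Bijective
      (fun p : {l : List α // IsMinusPath ρ l} × {l : List α // IsZeroPath ρ l} ×
          {l : List α // IsPlusPath ρ l} =>
        (p.1 : List α) ++ (p.2.1 : List α) ++ (p.2.2 : List α)) := by
  constructor
  · rintro ⟨⟨a, ha⟩, ⟨b, hb⟩, ⟨c, hc⟩⟩ ⟨⟨a', ha'⟩, ⟨b', hb'⟩, ⟨c', hc'⟩⟩ h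
    simp only [List.append_assoc] at h
    obtain ⟨rfl, hbc⟩ := eq_of_isMinusPath_isNonnegPath ha
      (hb.isNonnegPath.append hc.isNonnegPath) ha' (hb'.isNonnegPath.append hc'.isNonnegPath) h
    obtain ⟨rfl, rfl⟩ := eq_of_isZeroPath_isPlusPath hb hc hb' hc' hbc
    rfl
  · intro l
    obtain ⟨a, r, ha, hr, rfl⟩ := exists_isMinusPath_isNonnegPath ρ l
    obtain ⟨b, c, hb, hc, rfl⟩ := hr.exists_isZeroPath_isPlusPath
    exact ⟨⟨⟨a, ha⟩, ⟨b, hb⟩, ⟨c, hc⟩⟩, List.append_assoc a b c⟩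

/-- **Proposition 3.2.** For a Gessel pair `(H, ρ)` (with `H` the free monoid
on the set `α` of its primes and `ρ` the homomorphism induced by `ρ : α → ℤ`),
the sets `H₋`, `H₀`, `H₊` of minus-, zero-, and plus-paths are free
submonoids, and the map `H₋ × H₀ × H₊ → H`, `(π₋, π₀, π₊) ↦ π₋ π₀ π₊`
(whose inverse is `π ↦ (π₋, π₀, π₊)`) is a bijection. -/
theorem gessel_pair_free_submonoids_and_bijection {α : Type*} (ρ : α → ℤ) :
    IsFreeSubmonoid {l : List α | IsMinusPath ρ l} ∧
    IsFreeSubmonoid {l : List α | IsZeroPath ρ l} ∧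
    IsFreeSubmonoid {l : List α | IsPlusPath ρ l} ∧
    Function.Bijective
      (fun p : {l : List α // IsMinusPath ρ l} × {l : List α // IsZeroPath ρ l} ×
          {l : List α // IsPlusPath ρ l} =>
        (p.1 : List α) ++ (p.2.1 : List α) ++ (p.2.2 : List α)) := by
  refine ⟨?_, ?_, ?_, bijective_append_minus_zero_plus ρ⟩
  · exact isFreeSubmonoid_of_stable (Or.inl rfl) (fun _ ha _ hb => IsMinusPath.append ha hb)
      fun _ _ _ _ _ hpr _ => IsMinusPath.of_append_right hpr
  · exact isFreeSubmonoid_of_stable ⟨rfl, fun _ => by simp⟩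
      (fun _ ha _ hb => IsZeroPath.append ha hb)
      fun _ _ _ hp _ hpr _ => IsZeroPath.of_append_right hp hpr
  · exact isFreeSubmonoid_of_stable (fun _ _ h => by simp at h; omega)
      (fun _ ha _ hb => IsPlusPath.append ha hb)
      fun _ _ _ _ _ _ hrs => IsPlusPath.of_append_left hrs
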